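/- arXiv:1102.1165 — 2 statements merged into one kernel-verified Lean document; each statement's English description precedes it below -/
import Mathlib

section
/- With the parameters, random variables, and definitions of the Gaussian scheme below, assuming Ũ, W₁, W₂, S₀, S₁′, S₂′, Z are square-integrable with mean zero and Var(Ũ) = Var(W₁) = Var(W₂) = 1, Var(S₀) = Q₀, Var(S₁′) = Q₁′, Var(S₂′) = Q₂′, Var(Z) = N, the residuals φ₁ and φ₂ are uncorrelated with the channel output: E[φ₁ · Y] = 0 and E[φ₂ · Y] = 0. -/
/-!
The seven inputs are independent and centred, hence pairwise orthogonal in `L²`, so the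
correlation of two linear combinations of them is `∑ cᵢ dᵢ E[Xᵢ²]`. For `φ₁` this gives
`E[φ₁ Y] = b₁ + γ₁ Q₁' - γ₀₁ D`, which vanishes by the choice of `γ₀₁`; symmetrically for `φ₂`.
-/

open MeasureTheory ProbabilityTheory

section Orthogonal

variable {Ω ι : Type*} [MeasurableSpace Ω] {μ : Measure Ω}

lemma integral_sum_mul_sum_of_pairwise_orthogonal [Fintype ι] {X : ι → Ω → ℝ}
    (hX : ∀ i, MemLp (X i) 2 μ) (horth : Pairwise fun i j ↦ ∫ ω, X i ω * X j ω ∂μ = 0)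
    (c d : ι → ℝ) :
    ∫ ω, (∑ i, c i * X i ω) * (∑ j, d j * X j ω) ∂μ
      = ∑ i, c i * d i * ∫ ω, X i ω ^ 2 ∂μ := by
  have hint : ∀ i j, Integrable (fun ω ↦ c i * d j * (X i ω * X j ω)) μ :=
    fun i j ↦ ((hX i).integrable_mul (hX j)).const_mul _
  calc ∫ ω, (∑ i, c i * X i ω) * (∑ j, d j * X j ω) ∂μ
      = ∫ ω, ∑ i, ∑ j, c i * d j * (X i ω * X j ω) ∂μ := by
        simp_rw [Finset.sum_mul_sum]; congr! 4; ring
    _ = ∑ i, ∑ j, c i * d j * ∫ ω, X i ω * X j ω ∂μ := by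
        rw [integral_finsetSum _ fun i _ ↦ integrable_finsetSum _ fun j _ ↦ hint i j]
        simp_rw [integral_finsetSum _ fun j _ ↦ hint _ j, integral_const_mul]
    _ = ∑ i, c i * d i * ∫ ω, X i ω ^ 2 ∂μ := by
        refine Finset.sum_congr rfl fun i _ ↦ ?_
        rw [Finset.sum_eq_single i (fun j _ hji ↦ by rw [horth hji.symm, mul_zero]) (by simp)]
        simp_rw [sq]

lemma ProbabilityTheory.iIndepFun.pairwise_integral_mul_eq_zero [IsProbabilityMeasure μ]
    {X : ι → Ω → ℝ} (hindep : iIndepFun X μ) (hX : ∀ i, AEStronglyMeasurable (X i) μ)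
    (hmean : ∀ i, ∫ ω, X i ω ∂μ = 0) :
    Pairwise fun i j ↦ ∫ ω, X i ω * X j ω ∂μ = 0 := fun i j hij ↦
  ((hindep.indepFun hij).integral_fun_mul_eq_mul_integral (hX i) (hX j)).trans
    (by rw [hmean i, zero_mul])

end Orthogonal

theorem residual_phi1_phi2_uncorrelated_with_output_general
    {Ω : Type*} [MeasurableSpace Ω] (μ : Measure Ω) [IsProbabilityMeasure μ]
    (Q₁' Q₂' N : ℝ)
    (hQ₁' : 0 < Q₁') (hQ₂' : 0 < Q₂') (hN : 0 < N)
    (a b₁ b₂ D γ₁ γ₂ γ₀₁ γ₀₂ : ℝ)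
    (hD : D = a ^ 2 + b₁ ^ 2 + b₂ ^ 2 + Q₁' + Q₂' + N)
    (hγ₀₁ : γ₀₁ = (b₁ + γ₁ * Q₁') / D)
    (hγ₀₂ : γ₀₂ = (b₂ + γ₂ * Q₂') / D)
    (U W₁ W₂ S₀ S₁' S₂' Z : Ω → ℝ)
    (hindep : iIndepFun ![U, W₁, W₂, S₀, S₁', S₂', Z] μ)
    (Y φ₁ φ₂ : Ω → ℝ)
    (hY : ∀ ω, Y ω = a * U ω + b₁ * W₁ ω + b₂ * W₂ ω + S₀ ω + S₁' ω + S₂' ω + Z ω)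
    (hφ₁ : ∀ ω, φ₁ ω = W₁ ω + γ₁ * S₁' ω - γ₀₁ * (Y ω - S₀ ω))
    (hφ₂ : ∀ ω, φ₂ ω = W₂ ω + γ₂ * S₂' ω - γ₀₂ * (Y ω - S₀ ω))
    (hU2 : MemLp U 2 μ) (hW₁2 : MemLp W₁ 2 μ) (hW₂2 : MemLp W₂ 2 μ)
    (hS₀2 : MemLp S₀ 2 μ) (hS₁'2 : MemLp S₁' 2 μ) (hS₂'2 : MemLp S₂' 2 μ) (hZ2 : MemLp Z 2 μ)
    (hUm : ∫ ω, U ω ∂μ = 0) (hW₁m : ∫ ω, W₁ ω ∂μ = 0) (hW₂m : ∫ ω, W₂ ω ∂μ = 0)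
    (hS₀m : ∫ ω, S₀ ω ∂μ = 0) (hS₁'m : ∫ ω, S₁' ω ∂μ = 0) (hS₂'m : ∫ ω, S₂' ω ∂μ = 0)
    (hZm : ∫ ω, Z ω ∂μ = 0)
    (hUv : variance U μ = 1) (hW₁v : variance W₁ μ = 1) (hW₂v : variance W₂ μ = 1)
    (hS₁'v : variance S₁' μ = Q₁') (hS₂'v : variance S₂' μ = Q₂')
    (hZv : variance Z μ = N)
    : (∫ ω, φ₁ ω * Y ω ∂μ = 0) ∧ (∫ ω, φ₂ ω * Y ω ∂μ = 0) := by
  set X : Fin 7 → Ω → ℝ := ![U, W₁, W₂, S₀, S₁', S₂', Z]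
  have hX2 : ∀ i, MemLp (X i) 2 μ := by intro i; fin_cases i <;> assumption
  have hXm : ∀ i, ∫ ω, X i ω ∂μ = 0 := by intro i; fin_cases i <;> assumption
  have hXsq : ∀ i, ∫ ω, X i ω ^ 2 ∂μ = ![1, 1, 1, Var[S₀; μ], Q₁', Q₂', N] i := by
    intro i
    rw [← variance_of_integral_eq_zero (hX2 i).aemeasurable (hXm i)]
    fin_cases i
    exacts [hUv, hW₁v, hW₂v, rfl, hS₁'v, hS₂'v, hZv]
  have hYX : Y = fun ω ↦ ∑ i, ![a, b₁, b₂, 1, 1, 1, 1] i * X i ω := by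
    funext ω; simp [X, Fin.sum_univ_seven, hY]
  have corr_Y : ∀ c : Fin 7 → ℝ, ∫ ω, (∑ i, c i * X i ω) * Y ω ∂μ
      = c 0 * a + c 1 * b₁ + c 2 * b₂ + c 3 * Var[S₀; μ] + c 4 * Q₁' + c 5 * Q₂' + c 6 * N := by
    intro c
    rw [hYX, integral_sum_mul_sum_of_pairwise_orthogonal hX2
      (hindep.pairwise_integral_mul_eq_zero (fun i ↦ (hX2 i).aestronglyMeasurable) hXm),
      Fin.sum_univ_seven]
    simp [hXsq]
  have hD0 : D ≠ 0 := by rw [hD]; positivity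
  constructor
  · have hφX : φ₁ = fun ω ↦
        ∑ i, ![-(γ₀₁ * a), 1 - γ₀₁ * b₁, -(γ₀₁ * b₂), 0, γ₁ - γ₀₁, -γ₀₁, -γ₀₁] i * X i ω := by
      funext ω; simp [X, Fin.sum_univ_seven, hφ₁, hY]; ring
    rw [hφX, corr_Y]
    simp only [Matrix.cons_val]
    rw [hγ₀₁]; field_simp; rw [hD]; ring
  · have hφX : φ₂ = fun ω ↦
        ∑ i, ![-(γ₀₂ * a), -(γ₀₂ * b₁), 1 - γ₀₂ * b₂, 0, -γ₀₂, γ₂ - γ₀₂, -γ₀₂] i * X i ω := by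
      funext ω; simp [X, Fin.sum_univ_seven, hφ₂, hY]; ring
    rw [hφX, corr_Y]
    simp only [Matrix.cons_val]
    rw [hγ₀₂]; field_simp; rw [hD]; ring

/-- Orthogonality claims `E[φ₁·Y] = 0` and `E[φ₂·Y] = 0` (cases j = 1, 2) used in Lemma 1. -/
theorem residual_phi1_phi2_uncorrelated_with_output
    {Ω : Type*} [MeasurableSpace Ω] (μ : Measure Ω) [IsProbabilityMeasure μ]
    (P₁ P₂ Q₀ Q₁' Q₂' N : ℝ) (hP₁ : 0 < P₁) (hP₂ : 0 < P₂)
    (hQ₀ : 0 < Q₀) (hQ₁' : 0 < Q₁') (hQ₂' : 0 < Q₂') (hN : 0 < N)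
    (α₁ α₂ : ℝ) (hα₁ : α₁ ∈ Set.Icc (0 : ℝ) 1) (hα₂ : α₂ ∈ Set.Icc (0 : ℝ) 1)
    (η₁ η₂ : ℝ) (hη₁ : η₁ ∈ Set.Ioc (0 : ℝ) 1) (hη₂ : η₂ ∈ Set.Ioc (0 : ℝ) 1)
    (a b₁ b₂ D γ₀ γ₁ γ₂ γ₀₁ γ₀₂ : ℝ)
    (ha : a = Real.sqrt (α₁ * η₁ * P₁) + Real.sqrt (α₂ * η₂ * P₂))
    (hb₁ : b₁ = Real.sqrt ((1 - α₁) * η₁ * P₁))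
    (hb₂ : b₂ = Real.sqrt ((1 - α₂) * η₂ * P₂))
    (hD : D = a ^ 2 + b₁ ^ 2 + b₂ ^ 2 + Q₁' + Q₂' + N)
    (hγ₀ : γ₀ = a / D)
    (hγ₁ : γ₁ = b₁ / (b₁ ^ 2 + b₂ ^ 2 + Q₂' + N))
    (hγ₂ : γ₂ = b₂ / (b₁ ^ 2 + b₂ ^ 2 + Q₁' + N))
    (hγ₀₁ : γ₀₁ = (b₁ + γ₁ * Q₁') / D)
    (hγ₀₂ : γ₀₂ = (b₂ + γ₂ * Q₂') / D)
    (U W₁ W₂ S₀ S₁' S₂' Z : Ω → ℝ)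
    (hindep : iIndepFun ![U, W₁, W₂, S₀, S₁', S₂', Z] μ)
    (Y φ₀ φ₁ φ₂ : Ω → ℝ)
    (hY : ∀ ω, Y ω = a * U ω + b₁ * W₁ ω + b₂ * W₂ ω + S₀ ω + S₁' ω + S₂' ω + Z ω)
    (hφ₀ : ∀ ω, φ₀ ω = U ω - γ₀ * (Y ω - S₀ ω))
    (hφ₁ : ∀ ω, φ₁ ω = W₁ ω + γ₁ * S₁' ω - γ₀₁ * (Y ω - S₀ ω))
    (hφ₂ : ∀ ω, φ₂ ω = W₂ ω + γ₂ * S₂' ω - γ₀₂ * (Y ω - S₀ ω))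
    (hU2 : MemLp U 2 μ) (hW₁2 : MemLp W₁ 2 μ) (hW₂2 : MemLp W₂ 2 μ)
    (hS₀2 : MemLp S₀ 2 μ) (hS₁'2 : MemLp S₁' 2 μ) (hS₂'2 : MemLp S₂' 2 μ) (hZ2 : MemLp Z 2 μ)
    (hUm : ∫ ω, U ω ∂μ = 0) (hW₁m : ∫ ω, W₁ ω ∂μ = 0) (hW₂m : ∫ ω, W₂ ω ∂μ = 0)
    (hS₀m : ∫ ω, S₀ ω ∂μ = 0) (hS₁'m : ∫ ω, S₁' ω ∂μ = 0) (hS₂'m : ∫ ω, S₂' ω ∂μ = 0)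
    (hZm : ∫ ω, Z ω ∂μ = 0)
    (hUv : variance U μ = 1) (hW₁v : variance W₁ μ = 1) (hW₂v : variance W₂ μ = 1)
    (hS₀v : variance S₀ μ = Q₀) (hS₁'v : variance S₁' μ = Q₁') (hS₂'v : variance S₂' μ = Q₂')
    (hZv : variance Z μ = N)
    : (∫ ω, φ₁ ω * Y ω ∂μ = 0) ∧ (∫ ω, φ₂ ω * Y ω ∂μ = 0) :=
  residual_phi1_phi2_uncorrelated_with_output_general μ Q₁' Q₂' N hQ₁' hQ₂' hN a b₁ b₂ D γ₁ γ₂ γ₀₁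
    γ₀₂ hD hγ₀₁ hγ₀₂ U W₁ W₂ S₀ S₁' S₂' Z hindep Y φ₁ φ₂ hY hφ₁ hφ₂ hU2 hW₁2 hW₂2 hS₀2 hS₁'2 hS₂'2
    hZ2 hUm hW₁m hW₂m hS₀m hS₁'m hS₂'m hZm hUv hW₁v hW₂v hS₁'v hS₂'v hZv
end

section
/- Let Ω be a finite probability space and let U, V₁, V₂, S₁, S₂ be random variables on Ω taking values in nonempty finite types. Assume the two Markov chains (S₂,V₂) − (U,S₁) − V₁ (the pair (S₂,V₂) and V₁ are conditionally independent given (U,S₁)) and S₁ − (U,S₂) − V₂ (S₁ and V₂ are conditionally independent given (U,S₂)). Then I(V₁;S₁ | U) + I(V₂;S₂ | U) − I(V₁;V₂ | U) = I((V₁,V₂);(S₁,S₂) | U). -/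
open MeasureTheory Real

variable {Ω : Type*} [Fintype Ω] [MeasurableSpace Ω] [MeasurableSingletonClass Ω]

/-- Shannon entropy `H(X) = Σ_x negMulLog (P(X = x))` of a random variable on a finite
probability space. -/
noncomputable def entropy' {α : Type*} [Fintype α] (μ : Measure Ω) (X : Ω → α) : ℝ :=
  ∑ x : α, Real.negMulLog (μ (X ⁻¹' {x})).toReal

/-- Conditional entropy `H(X|Y) = H(X,Y) − H(Y)`. -/
noncomputable def condEntropy' {α β : Type*} [Fintype α] [Fintype β]
    (μ : Measure Ω) (X : Ω → α) (Y : Ω → β) : ℝ :=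
  entropy' μ (fun ω => (X ω, Y ω)) - entropy' μ Y

/-- Conditional mutual information `I(X;Y|Z) = H(X|Z) + H(Y|Z) − H(X,Y|Z)`. -/
noncomputable def condMutualInfo' {α β γ : Type*} [Fintype α] [Fintype β] [Fintype γ]
    (μ : Measure Ω) (X : Ω → α) (Y : Ω → β) (Z : Ω → γ) : ℝ :=
  condEntropy' μ X Z + condEntropy' μ Y Z - condEntropy' μ (fun ω => (X ω, Y ω)) Z

/-- `X − Z − Y` is a Markov chain: `X` and `Y` are conditionally independent given `Z`, i.e.
`P(X=x, Y=y, Z=z)·P(Z=z) = P(X=x, Z=z)·P(Y=y, Z=z)` for all `x, y, z`. -/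
def IsMarkovChain {α β γ : Type*} (μ : Measure Ω) (X : Ω → α) (Z : Ω → γ) (Y : Ω → β) : Prop :=
  ∀ (x : α) (y : β) (z : γ),
    (μ (X ⁻¹' {x} ∩ Y ⁻¹' {y} ∩ Z ⁻¹' {z})).toReal * (μ (Z ⁻¹' {z})).toReal =
      (μ (X ⁻¹' {x} ∩ Z ⁻¹' {z})).toReal * (μ (Y ⁻¹' {y} ∩ Z ⁻¹' {z})).toReal

/-! Writing `H(X) = -∑ ω, μ{ω} log μ(X = X ω)` shows that the entropy of `X` only depends on the
partition of `Ω` into level sets of `X`, so rearranging a tuple of random variables does not change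
its entropy. In the same form, a Markov chain `A − C − B` gives
`H(A,B,C) + H(C) = H(A,C) + H(B,C)` term by term, from `p(a,b,c) p(c) = p(a,c) p(b,c)`.
Together, the two chains give
`H(V₁,V₂,S₁,S₂,U) = H(S₁,S₂,U) + H(V₁,S₁,U) - H(S₁,U) + H(V₂,S₂,U) - H(S₂,U)`,
which is the claimed identity once every mutual information is expanded into entropies. -/

section

variable {α β γ : Type*} [Fintype α] [Fintype β] [Fintype γ] (μ : Measure Ω) [IsFiniteMeasure μ]

theorem entropy'_eq_neg_sum_mul_log_fiber (X : Ω → α) :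
    entropy' μ X = -∑ ω, μ.real {ω} * log (μ.real (X ⁻¹' {X ω})) := by
  classical
  have hfiber (x : α) : μ.real (X ⁻¹' {x}) = ∑ ω with X ω = x, μ.real {ω} := by
    rw [sum_measureReal_singleton]; congr 1; ext; simp
  rw [← Finset.sum_fiberwise Finset.univ X, ← Finset.sum_neg_distrib]
  refine Finset.sum_congr rfl fun x _ => ?_
  rw [negMulLog, ← measureReal_def, neg_mul, neg_inj]
  nth_rw 1 [hfiber x]
  rw [Finset.sum_mul]
  refine Finset.sum_congr rfl fun ω hω => ?_
  rw [(Finset.mem_filter.1 hω).2]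

theorem entropy'_congr {X : Ω → α} {Y : Ω → β} (h : ∀ ω ω', X ω = X ω' ↔ Y ω = Y ω') :
    entropy' μ X = entropy' μ Y := by
  have hfiber (ω : Ω) : X ⁻¹' {X ω} = Y ⁻¹' {Y ω} := by
    ext ω'; exact (eq_comm.trans (h ω ω')).trans eq_comm
  simp only [entropy'_eq_neg_sum_mul_log_fiber, hfiber]

theorem entropy'_add_of_isMarkovChain {A : Ω → α} {B : Ω → β} {C : Ω → γ}
    (h : IsMarkovChain μ A C B) :
    entropy' μ (fun ω => (A ω, B ω, C ω)) + entropy' μ C =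
      entropy' μ (fun ω => (A ω, C ω)) + entropy' μ (fun ω => (B ω, C ω)) := by
  simp only [entropy'_eq_neg_sum_mul_log_fiber, ← neg_add, ← Finset.sum_add_distrib, neg_inj]
  refine Finset.sum_congr rfl fun ω _ => ?_
  rcases (measureReal_nonneg : 0 ≤ μ.real {ω}).eq_or_lt with hω | hω
  · simp [← hω]
  have hpos {s : Set Ω} (hs : ω ∈ s) : 0 < μ.real s :=
    hω.trans_le (measureReal_mono (Set.singleton_subset_iff.2 hs))
  simp only [← Set.singleton_prod_singleton, Set.mk_preimage_prod, ← Set.inter_assoc]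
  rw [← mul_add, ← mul_add, ← log_mul (hpos (by simp)).ne' (hpos (by simp)).ne',
    ← log_mul (hpos (by simp)).ne' (hpos (by simp)).ne']
  exact congrArg (μ.real {ω} * log ·) (h (A ω) (B ω) (C ω))

end

theorem step_d_markov_identity_general
    (μ : Measure Ω) [IsProbabilityMeasure μ]
    {𝒰 𝒱₁ 𝒱₂ 𝒮₁ 𝒮₂ : Type*} [Fintype 𝒰] [Fintype 𝒱₁] [Fintype 𝒱₂] [Fintype 𝒮₁] [Fintype 𝒮₂]
    (U : Ω → 𝒰) (V₁ : Ω → 𝒱₁) (V₂ : Ω → 𝒱₂) (S₁ : Ω → 𝒮₁) (S₂ : Ω → 𝒮₂)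
    (hMarkov₁ : IsMarkovChain μ (fun ω => (S₂ ω, V₂ ω)) (fun ω => (U ω, S₁ ω)) V₁)
    (hMarkov₂ : IsMarkovChain μ S₁ (fun ω => (U ω, S₂ ω)) V₂) :
    condMutualInfo' μ V₁ S₁ U + condMutualInfo' μ V₂ S₂ U -
        condMutualInfo' μ V₁ V₂ U =
      condMutualInfo' μ (fun ω => (V₁ ω, V₂ ω)) (fun ω => (S₁ ω, S₂ ω)) U := by
  have h₁ := entropy'_add_of_isMarkovChain μ hMarkov₁
  have h₂ := entropy'_add_of_isMarkovChain μ hMarkov₂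
  have e₁ : entropy' μ (fun ω => ((S₂ ω, V₂ ω), V₁ ω, (U ω, S₁ ω))) =
      entropy' μ (fun ω => (((V₁ ω, V₂ ω), (S₁ ω, S₂ ω)), U ω)) :=
    entropy'_congr μ fun _ _ => by simp only [Prod.mk.injEq]; tauto
  have e₂ : entropy' μ (fun ω => ((S₂ ω, V₂ ω), (U ω, S₁ ω))) =
      entropy' μ (fun ω => (S₁ ω, V₂ ω, (U ω, S₂ ω))) :=
    entropy'_congr μ fun _ _ => by simp only [Prod.mk.injEq]; tauto
  have e₃ : entropy' μ (fun ω => (V₁ ω, (U ω, S₁ ω))) =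
      entropy' μ (fun ω => ((V₁ ω, S₁ ω), U ω)) :=
    entropy'_congr μ fun _ _ => by simp only [Prod.mk.injEq]; tauto
  have e₄ : entropy' μ (fun ω => (S₁ ω, (U ω, S₂ ω))) =
      entropy' μ (fun ω => ((S₁ ω, S₂ ω), U ω)) :=
    entropy'_congr μ fun _ _ => by simp only [Prod.mk.injEq]; tauto
  have e₅ : entropy' μ (fun ω => (V₂ ω, (U ω, S₂ ω))) =
      entropy' μ (fun ω => ((V₂ ω, S₂ ω), U ω)) :=
    entropy'_congr μ fun _ _ => by simp only [Prod.mk.injEq]; tauto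
  have e₆ : entropy' μ (fun ω => (U ω, S₁ ω)) = entropy' μ (fun ω => (S₁ ω, U ω)) :=
    entropy'_congr μ fun _ _ => by simp only [Prod.mk.injEq]; tauto
  have e₇ : entropy' μ (fun ω => (U ω, S₂ ω)) = entropy' μ (fun ω => (S₂ ω, U ω)) :=
    entropy'_congr μ fun _ _ => by simp only [Prod.mk.injEq]; tauto
  simp only [condMutualInfo', condEntropy']
  linarith

/-- Step (d) in bound (17) of the proof of Theorem 1: if `(S₂,V₂) − (U,S₁) − V₁` and
`S₁ − (U,S₂) − V₂` are Markov chains, then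
`I(V₁;S₁|U) + I(V₂;S₂|U) − I(V₁;V₂|U) = I(V₁,V₂;S₁,S₂|U)`. -/
theorem step_d_markov_identity
    (μ : Measure Ω) [IsProbabilityMeasure μ]
    {𝒰 𝒱₁ 𝒱₂ 𝒮₁ 𝒮₂ : Type*} [Fintype 𝒰] [Fintype 𝒱₁] [Fintype 𝒱₂] [Fintype 𝒮₁] [Fintype 𝒮₂]
    [Nonempty 𝒰] [Nonempty 𝒱₁] [Nonempty 𝒱₂] [Nonempty 𝒮₁] [Nonempty 𝒮₂]
    (U : Ω → 𝒰) (V₁ : Ω → 𝒱₁) (V₂ : Ω → 𝒱₂) (S₁ : Ω → 𝒮₁) (S₂ : Ω → 𝒮₂)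
    (hMarkov₁ : IsMarkovChain μ (fun ω => (S₂ ω, V₂ ω)) (fun ω => (U ω, S₁ ω)) V₁)
    (hMarkov₂ : IsMarkovChain μ S₁ (fun ω => (U ω, S₂ ω)) V₂) :
    condMutualInfo' μ V₁ S₁ U + condMutualInfo' μ V₂ S₂ U -
        condMutualInfo' μ V₁ V₂ U =
      condMutualInfo' μ (fun ω => (V₁ ω, V₂ ω)) (fun ω => (S₁ ω, S₂ ω)) U :=
  step_d_markov_identity_general μ U V₁ V₂ S₁ S₂ hMarkov₁ hMarkov₂
end
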